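/- Let b : {(s,t) : 0 ≤ s ≤ t} → ℕ satisfy b^{s,t} ≥ b^{s,t+1} and b^{s,t} ≤ b^{s+1,t} for relevant indices (monotonicity of persistent Betti numbers). Then for i < j the quantity μ^{i,j} = (b^{i,j−1} − b^{i,j}) − (b^{i−1,j−1} − b^{i−1,j}) satisfies Σ_{i ≤ s, j > t, j ≤ M} μ^{i,j} = b^{s,t} − b^{s,M} for any M ≥ t ≥ s (the fundamental inclusion–exclusion identity of persistence diagrams). -/

import Mathlib

set_option autoImplicit false

/-! `μ i j` is the mixed second difference of `b`, so its sum over the rectangle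
`(-1, s] × (t, M]` telescopes in both indices down to the four corners; the two corners on the
row `i = -1` vanish. -/

open Finset

namespace Int

variable {G : Type*} [AddCommGroup G]

theorem sum_Icc_add_one_sub (f : ℤ → G) {a c : ℤ} (hac : a ≤ c) :
    ∑ j ∈ Icc (a + 1) c, (f (j - 1) - f j) = f a - f c := by
  induction c, hac using Int.leInduction with
  | base => simp
  | succ n hn ih =>
    rw [← insert_Icc_right_eq_Icc_add_one (by omega), sum_insert (by simp), ih,
      add_sub_cancel_right]
    abel

theorem sum_Icc_sum_Icc_mixed_sub (g : ℤ → ℤ → G) {a c a' c' : ℤ} (hac : a ≤ c)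
    (hac' : a' ≤ c') :
    ∑ i ∈ Icc (a + 1) c, ∑ j ∈ Icc (a' + 1) c',
        ((g i (j - 1) - g i j) - (g (i - 1) (j - 1) - g (i - 1) j)) =
      (g c a' - g c c') - (g a a' - g a c') := by
  set H : ℤ → G := fun i ↦ g i a' - g i c'
  have inner (i : ℤ) : ∑ j ∈ Icc (a' + 1) c',
      ((g i (j - 1) - g i j) - (g (i - 1) (j - 1) - g (i - 1) j)) = -(H (i - 1) - H i) := by
    calc _ = ∑ j ∈ Icc (a' + 1) c', ((g i (j - 1) - g (i - 1) (j - 1)) - (g i j - g (i - 1) j)) :=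
          sum_congr rfl fun j _ ↦ by abel
      _ = (g i a' - g (i - 1) a') - (g i c' - g (i - 1) c') :=
          sum_Icc_add_one_sub (fun j ↦ g i j - g (i - 1) j) hac'
      _ = -(H (i - 1) - H i) := by simp only [H]; abel
  simp only [inner, sum_neg_distrib, sum_Icc_add_one_sub H hac, H]
  abel

end Int

theorem persistence_inclusion_exclusion_general (b : ℤ → ℤ → ℕ)
    (hb_zero : ∀ s t : ℤ, s ≤ 0 → b s t = 0)
    (s t M : ℤ) (hs : 0 ≤ s) (htM : t ≤ M) :
    (∑ i ∈ Finset.Icc (0 : ℤ) s, ∑ j ∈ Finset.Icc (t + 1) M,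
        (((b i (j - 1) : ℤ) - (b i j : ℤ)) - ((b (i - 1) (j - 1) : ℤ) - (b (i - 1) j : ℤ)))) =
      (b s t : ℤ) - (b s M : ℤ) := by
  have h := Int.sum_Icc_sum_Icc_mixed_sub (fun i j ↦ (b i j : ℤ)) (by omega : -1 ≤ s) htM
  rw [neg_add_cancel, hb_zero (-1) t (by norm_num), hb_zero (-1) M (by norm_num)] at h
  simpa using h

/-- Let `b s t` be a doubly-indexed family of natural numbers
(persistent Betti numbers), monotone in the sense that `b s (t+1) ≤ b s t` and
`b s t ≤ b (s+1) t` on relevant indices, with the convention `b s t = 0` for `s ≤ 0`.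
Then for the persistence multiplicities
`μ i j = (b i (j−1) − b i j) − (b (i−1) (j−1) − b (i−1) j)` one has, for `s ≤ t ≤ M`:
`Σ_{i ≤ s, t < j ≤ M} μ i j = b s t − b s M`. -/
theorem persistence_inclusion_exclusion (b : ℤ → ℤ → ℕ)
    (hb_zero : ∀ s t : ℤ, s ≤ 0 → b s t = 0)
    (hb_mono_t : ∀ s t : ℤ, 0 ≤ s → s ≤ t → b s (t + 1) ≤ b s t)
    (hb_mono_s : ∀ s t : ℤ, 0 ≤ s → s + 1 ≤ t → b s t ≤ b (s + 1) t)
    (s t M : ℤ) (hs : 0 ≤ s) (hst : s ≤ t) (htM : t ≤ M) :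
    (∑ i ∈ Finset.Icc (0 : ℤ) s, ∑ j ∈ Finset.Icc (t + 1) M,
        (((b i (j - 1) : ℤ) - (b i j : ℤ)) - ((b (i - 1) (j - 1) : ℤ) - (b (i - 1) j : ℤ)))) =
      (b s t : ℤ) - (b s M : ℤ) :=
  persistence_inclusion_exclusion_general b hb_zero s t M hs htM
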